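/- There exist four pairwise disjoint projective lines in ℝP³, namely those corresponding to l₁ = span{(1,0,0,0),(0,1,0,0)}, l₂ = span{(1,1,1/2,1/6),(0,1,1,1/2)}, l₃ = span{(1,101/100,401/200,2503/1500),(0,1,5/2,5/2)}, l₄ = span{(0,0,1,0),(0,0,0,1)}, such that no projective line in ℝP³ intersects all four of them. -/
import Mathlib


/-- The four 2-planes `l₁, l₂, l₃, l₄` in `ℝ⁴`. -/
def fourPlanes : Fin 4 → Submodule ℝ (Fin 4 → ℝ)
  | 0 => Submodule.span ℝ {![1, 0, 0, 0], ![0, 1, 0, 0]}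
  | 1 => Submodule.span ℝ {![1, 1, 1/2, 1/6], ![0, 1, 1, 1/2]}
  | 2 => Submodule.span ℝ {![1, 101/100, 401/200, 2503/1500], ![0, 1, 5/2, 5/2]}
  | 3 => Submodule.span ℝ {![0, 0, 1, 0], ![0, 0, 0, 1]}

private lemma fp_disj (x y z w : Fin 4 → ℝ)
    (h : ∀ a b c d : ℝ, a • x + b • y = c • z + d • w → a = 0 ∧ b = 0) :
    Submodule.span ℝ {x, y} ⊓ Submodule.span ℝ {z, w} = ⊥ := by
  rw [eq_bot_iff]
  intro v hv
  rw [Submodule.mem_inf] at hv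
  obtain ⟨h1, h2⟩ := hv
  obtain ⟨a, b, hab⟩ := Submodule.mem_span_pair.mp h1
  obtain ⟨c, d, hcd⟩ := Submodule.mem_span_pair.mp h2
  obtain ⟨ha, hb⟩ := h a b c d (hab.trans hcd.symm)
  rw [Submodule.mem_bot, ← hab, ha, hb]
  simp

private lemma d01 : fourPlanes 0 ⊓ fourPlanes 1 = ⊥ := by
  apply fp_disj
  intro a b c d he
  have e0 := congrFun he 0
  have e1 := congrFun he 1
  have e2 := congrFun he 2
  have e3 := congrFun he 3
  simp only [Pi.add_apply, Pi.smul_apply, Matrix.cons_val_zero, Matrix.cons_val_one,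
    Matrix.head_cons, Matrix.cons_val_two, Matrix.cons_val_three, Matrix.tail_cons,
    smul_eq_mul, mul_zero, mul_one, add_zero, zero_add] at e0 e1 e2 e3
  constructor <;> linarith

private lemma d02 : fourPlanes 0 ⊓ fourPlanes 2 = ⊥ := by
  apply fp_disj
  intro a b c d he
  have e0 := congrFun he 0
  have e1 := congrFun he 1
  have e2 := congrFun he 2
  have e3 := congrFun he 3
  simp only [Pi.add_apply, Pi.smul_apply, Matrix.cons_val_zero, Matrix.cons_val_one,
    Matrix.head_cons, Matrix.cons_val_two, Matrix.cons_val_three, Matrix.tail_cons,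
    smul_eq_mul, mul_zero, mul_one, add_zero, zero_add] at e0 e1 e2 e3
  constructor <;> linarith

private lemma d03 : fourPlanes 0 ⊓ fourPlanes 3 = ⊥ := by
  apply fp_disj
  intro a b c d he
  have e0 := congrFun he 0
  have e1 := congrFun he 1
  simp only [Pi.add_apply, Pi.smul_apply, Matrix.cons_val_zero, Matrix.cons_val_one,
    Matrix.head_cons, Matrix.cons_val_two, Matrix.cons_val_three, Matrix.tail_cons,
    smul_eq_mul, mul_zero, mul_one, add_zero, zero_add] at e0 e1
  constructor <;> linarith

private lemma d12 : fourPlanes 1 ⊓ fourPlanes 2 = ⊥ := by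
  apply fp_disj
  intro a b c d he
  have e0 := congrFun he 0
  have e1 := congrFun he 1
  have e2 := congrFun he 2
  have e3 := congrFun he 3
  simp only [Pi.add_apply, Pi.smul_apply, Matrix.cons_val_zero, Matrix.cons_val_one,
    Matrix.head_cons, Matrix.cons_val_two, Matrix.cons_val_three, Matrix.tail_cons,
    smul_eq_mul, mul_zero, mul_one, add_zero, zero_add] at e0 e1 e2 e3
  constructor <;> linarith

private lemma d13 : fourPlanes 1 ⊓ fourPlanes 3 = ⊥ := by
  apply fp_disj
  intro a b c d he
  have e0 := congrFun he 0
  have e1 := congrFun he 1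
  simp only [Pi.add_apply, Pi.smul_apply, Matrix.cons_val_zero, Matrix.cons_val_one,
    Matrix.head_cons, Matrix.cons_val_two, Matrix.cons_val_three, Matrix.tail_cons,
    smul_eq_mul, mul_zero, mul_one, add_zero, zero_add] at e0 e1
  constructor <;> linarith

private lemma d23 : fourPlanes 2 ⊓ fourPlanes 3 = ⊥ := by
  apply fp_disj
  intro a b c d he
  have e0 := congrFun he 0
  have e1 := congrFun he 1
  simp only [Pi.add_apply, Pi.smul_apply, Matrix.cons_val_zero, Matrix.cons_val_one,
    Matrix.head_cons, Matrix.cons_val_two, Matrix.cons_val_three, Matrix.tail_cons,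
    smul_eq_mul, mul_zero, mul_one, add_zero, zero_add] at e0 e1
  constructor <;> linarith

set_option maxHeartbeats 1000000 in
/-- The four projective lines in `ℝP³` corresponding to `l₁, l₂, l₃, l₄` are
pairwise disjoint, and no projective line in `ℝP³` (i.e. no 2-dimensional
linear subspace of `ℝ⁴`, meeting meaning nontrivial intersection) intersects
all four of them. -/
theorem no_real_line_meets_all_four :
    (∀ i j : Fin 4, i ≠ j → fourPlanes i ⊓ fourPlanes j = ⊥) ∧
    ¬ ∃ W : Submodule ℝ (Fin 4 → ℝ), Module.finrank ℝ W = 2 ∧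
      ∀ i : Fin 4, W ⊓ fourPlanes i ≠ ⊥ := by
  constructor
  · intro i j hij
    fin_cases i <;> fin_cases j <;>
      first
        | exact absurd rfl hij
        | exact d01
        | exact d02
        | exact d03
        | exact d12
        | exact d13
        | exact d23
        | (rw [inf_comm]; first | exact d01 | exact d02 | exact d03 | exact d12 | exact d13 | exact d23)
  · rintro ⟨W, hrank, hmeet⟩
    -- extract v1 ∈ W ⊓ l₁, nonzero
    obtain ⟨v1, hv1m, hv1ne⟩ := (Submodule.ne_bot_iff _).mp (hmeet 0)
    rw [Submodule.mem_inf] at hv1m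
    obtain ⟨hv1W, hv1l⟩ := hv1m
    obtain ⟨a, b, hab⟩ := Submodule.mem_span_pair.mp
      (show v1 ∈ Submodule.span ℝ {![1, 0, 0, 0], ![0, 1, 0, 0]} from hv1l)
    have hv1 : v1 = ![a, b, 0, 0] := by
      rw [← hab]; funext i; fin_cases i <;> simp
    subst hv1
    -- extract v4 ∈ W ⊓ l₄, nonzero
    obtain ⟨v4, hv4m, hv4ne⟩ := (Submodule.ne_bot_iff _).mp (hmeet 3)
    rw [Submodule.mem_inf] at hv4m
    obtain ⟨hv4W, hv4l⟩ := hv4m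
    obtain ⟨c, d, hcd⟩ := Submodule.mem_span_pair.mp
      (show v4 ∈ Submodule.span ℝ {![0, 0, 1, 0], ![0, 0, 0, 1]} from hv4l)
    have hv4 : v4 = ![0, 0, c, d] := by
      rw [← hcd]; funext i; fin_cases i <;> simp
    subst hv4
    have hab0 : ¬(a = 0 ∧ b = 0) := by
      rintro ⟨rfl, rfl⟩
      exact hv1ne (by funext i; fin_cases i <;> simp)
    have hcd0 : ¬(c = 0 ∧ d = 0) := by
      rintro ⟨rfl, rfl⟩
      exact hv4ne (by funext i; fin_cases i <;> simp)
    -- v1 and v4 are linearly independent, hence span W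
    have hli : LinearIndependent ℝ ![![a, b, 0, 0], ![(0:ℝ), 0, c, d]] := by
      rw [LinearIndependent.pair_iff]
      intro s t hst
      have e0 := congrFun hst 0
      have e1 := congrFun hst 1
      have e2 := congrFun hst 2
      have e3 := congrFun hst 3
      simp only [Pi.add_apply, Pi.smul_apply, Pi.zero_apply, Matrix.cons_val_zero,
        Matrix.cons_val_one, Matrix.head_cons, Matrix.cons_val_two, Matrix.cons_val_three,
        Matrix.tail_cons, smul_eq_mul, mul_zero, mul_one, add_zero, zero_add] at e0 e1 e2 e3
      constructor
      · rcases mul_eq_zero.mp e0 with h | h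
        · exact h
        · rcases mul_eq_zero.mp e1 with h' | h'
          · exact h'
          · exact absurd ⟨h, h'⟩ hab0
      · rcases mul_eq_zero.mp e2 with h | h
        · exact h
        · rcases mul_eq_zero.mp e3 with h' | h'
          · exact h'
          · exact absurd ⟨h, h'⟩ hcd0
    have hr : Set.range ![![a, b, 0, 0], ![(0:ℝ), 0, c, d]] =
        ({![a, b, 0, 0], ![(0:ℝ), 0, c, d]} : Set (Fin 4 → ℝ)) := by
      rw [show ({![a, b, 0, 0], ![(0:ℝ), 0, c, d]} : Set (Fin 4 → ℝ)) =
        {![(0:ℝ), 0, c, d], ![a, b, 0, 0]} from Set.pair_comm _ _]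
      simp
    have hfr : Module.finrank ℝ
        (Submodule.span ℝ ({![a, b, 0, 0], ![(0:ℝ), 0, c, d]} : Set (Fin 4 → ℝ))) = 2 := by
      rw [← hr]
      simpa using finrank_span_eq_card hli
    have hle : Submodule.span ℝ ({![a, b, 0, 0], ![(0:ℝ), 0, c, d]} : Set (Fin 4 → ℝ)) ≤ W := by
      rw [Submodule.span_le]
      intro x hx
      rcases hx with rfl | hx
      · exact hv1W
      · rw [Set.mem_singleton_iff] at hx; subst hx; exact hv4W
    have hWeq : Submodule.span ℝ ({![a, b, 0, 0], ![(0:ℝ), 0, c, d]} : Set (Fin 4 → ℝ)) = W :=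
      Submodule.eq_of_le_of_finrank_le hle (by rw [hrank, hfr])
    -- v2 ∈ W ⊓ l₂
    obtain ⟨v2, hv2m, hv2ne⟩ := (Submodule.ne_bot_iff _).mp (hmeet 1)
    rw [Submodule.mem_inf] at hv2m
    obtain ⟨hv2W, hv2l⟩ := hv2m
    rw [← hWeq] at hv2W
    obtain ⟨α, β, hαβ⟩ := Submodule.mem_span_pair.mp hv2W
    obtain ⟨s, t, hst⟩ := Submodule.mem_span_pair.mp
      (show v2 ∈ Submodule.span ℝ {![1, 1, 1/2, 1/6], ![0, 1, 1, 1/2]} from hv2l)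
    have he := hαβ.trans hst.symm
    have e0 := congrFun he 0
    have e1 := congrFun he 1
    have e2 := congrFun he 2
    have e3 := congrFun he 3
    simp only [Pi.add_apply, Pi.smul_apply, Matrix.cons_val_zero, Matrix.cons_val_one,
      Matrix.head_cons, Matrix.cons_val_two, Matrix.cons_val_three, Matrix.tail_cons,
      smul_eq_mul, mul_zero, mul_one, add_zero, zero_add] at e0 e1 e2 e3
    have hα : α ≠ 0 := by
      intro h
      rw [h] at e0 e1
      have hs0 : s = 0 := by linarith
      have ht0 : t = 0 := by linarith
      exact hv2ne (by rw [← hst, hs0, ht0]; simp)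
    have key2 : (b/2 - a/3)*c - (b - a/2)*d = 0 := by
      have h' : α * ((b/2 - a/3)*c - (b - a/2)*d) = 0 := by
        linear_combination (c/2 - d)*e1 + (d/2 - c/3)*e0 - c*e3 + d*e2
      rcases mul_eq_zero.mp h' with h | h
      · exact absurd h hα
      · exact h
    -- v3 ∈ W ⊓ l₃
    obtain ⟨v3, hv3m, hv3ne⟩ := (Submodule.ne_bot_iff _).mp (hmeet 2)
    rw [Submodule.mem_inf] at hv3m
    obtain ⟨hv3W, hv3l⟩ := hv3m
    rw [← hWeq] at hv3W
    obtain ⟨α', β', hαβ'⟩ := Submodule.mem_span_pair.mp hv3W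
    obtain ⟨s', t', hst'⟩ := Submodule.mem_span_pair.mp
      (show v3 ∈ Submodule.span ℝ {![1, 101/100, 401/200, 2503/1500], ![0, 1, 5/2, 5/2]}
        from hv3l)
    have he' := hαβ'.trans hst'.symm
    have f0 := congrFun he' 0
    have f1 := congrFun he' 1
    have f2 := congrFun he' 2
    have f3 := congrFun he' 3
    simp only [Pi.add_apply, Pi.smul_apply, Matrix.cons_val_zero, Matrix.cons_val_one,
      Matrix.head_cons, Matrix.cons_val_two, Matrix.cons_val_three, Matrix.tail_cons,
      smul_eq_mul, mul_zero, mul_one, add_zero, zero_add] at f0 f1 f2 f3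
    have hα' : α' ≠ 0 := by
      intro h
      rw [h] at f0 f1
      have hs0 : s' = 0 := by linarith
      have ht0 : t' = 0 := by linarith
      exact hv3ne (by rw [← hst', hs0, ht0]; simp)
    have key3 : (5*b/2 - 2569*a/3000)*c - (5*b/2 - 13*a/25)*d = 0 := by
      have h' : α' * ((5*b/2 - 2569*a/3000)*c - (5*b/2 - 13*a/25)*d) = 0 := by
        linear_combination (5*c/2 - 5*d/2)*f1 + (13*d/25 - 2569*c/3000)*f0 - c*f3 + d*f2
      rcases mul_eq_zero.mp h' with h | h
      · exact absurd h hα'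
      · exact h
    -- resultant
    have hRc : ((1529/6000)*a^2 - (1013/1000)*a*b + (5/4)*b^2) * c = 0 := by
      linear_combination (-(5*b/2 - 13*a/25))*key2 + (b - a/2)*key3
    have hRd : ((1529/6000)*a^2 - (1013/1000)*a*b + (5/4)*b^2) * d = 0 := by
      linear_combination (-(5*b/2 - 2569*a/3000))*key2 + (b/2 - a/3)*key3
    have hR : (1529/6000)*a^2 - (1013/1000)*a*b + (5/4)*b^2 = 0 := by
      by_cases hc : c = 0
      · rcases mul_eq_zero.mp hRd with h | h
        · exact h
        · exact absurd ⟨hc, h⟩ hcd0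
      · rcases mul_eq_zero.mp hRc with h | h
        · exact h
        · exact absurd h hc
    have h9 : (1529*a - 3039*b)^2 + 2231979*b^2 = 0 := by linear_combination 9174000 * hR
    have h10 : (1529*a - 3039*b)^2 = 0 := by nlinarith [sq_nonneg b, sq_nonneg (1529*a - 3039*b)]
    have h11 : b^2 = 0 := by nlinarith [sq_nonneg b, sq_nonneg (1529*a - 3039*b)]
    have hb : b = 0 := by
      have := pow_eq_zero_iff (n := 2) (by norm_num) |>.mp h11
      exact this
    have ha : a = 0 := by
      have := pow_eq_zero_iff (n := 2) (by norm_num) |>.mp h10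
      rw [hb] at this
      linarith
    exact hab0 ⟨ha, hb⟩
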